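/- For the Rule 22 cellular automaton on {0,1}^ℤ with local rule (S u)_i = u_{i−1} + u_i + u_{i+1} + u_{i−1}u_iu_{i+1} (mod 2): if a configuration u satisfies u_{2m−1} = 0 for all m ∈ ℤ and u_{4m} = 0 for all m ∈ ℤ, then (S² u)_{2m+1} = 0 for all odd indices and on even indices (S² u)_{2m} = u_{2m−2} + u_{2m+2} (mod 2), i.e., the square of Rule 22 restricted to such configurations acts as Rule 90 on the even sublattice. -/
import Mathlib


/-- Rule 22: `(Su)_i = u_{i-1} + u_i + u_{i+1} + u_{i-1} u_i u_{i+1}` mod 2. -/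
def rule22 (u : ℤ → ZMod 2) : ℤ → ZMod 2 :=
  fun i => u (i - 1) + u i + u (i + 1) + u (i - 1) * u i * u (i + 1)

/-- On configurations vanishing on odd sites and on sites divisible by 4, the
square of Rule 22 acts as Rule 90 on the even sublattice. -/
theorem rule22_sq_eq_rule90 (u : ℤ → ZMod 2)
    (hodd : ∀ m : ℤ, u (2 * m - 1) = 0) (h4 : ∀ m : ℤ, u (4 * m) = 0) :
    (∀ m : ℤ, rule22 (rule22 u) (2 * m + 1) = 0) ∧
    (∀ m : ℤ, rule22 (rule22 u) (2 * m) = u (2 * m - 2) + u (2 * m + 2)) := by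
  have hz : ∀ i : ℤ, i % 2 = 1 ∨ i % 4 = 0 → u i = 0 := by
    rintro i (h | h)
    · have e : i = 2 * ((i + 1) / 2) - 1 := by omega
      rw [e]; exact hodd _
    · have e : i = 4 * (i / 4) := by omega
      rw [e]; exact h4 _
  have hv0 : ∀ i : ℤ, i % 4 = 0 → rule22 u i = 0 := by
    intro i h
    simp only [rule22]
    rw [hz (i-1) (Or.inl (by omega)), hz i (Or.inr (by omega)),
        hz (i+1) (Or.inl (by omega))]
    ring
  have hv2 : ∀ i : ℤ, i % 4 = 2 → rule22 u i = u i := by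
    intro i h
    simp only [rule22]
    rw [hz (i-1) (Or.inl (by omega)), hz (i+1) (Or.inl (by omega))]
    ring
  have hv1 : ∀ i : ℤ, i % 4 = 1 → rule22 u i = u (i+1) := by
    intro i h
    simp only [rule22]
    rw [hz (i-1) (Or.inr (by omega)), hz i (Or.inl (by omega))]
    ring
  have hv3 : ∀ i : ℤ, i % 4 = 3 → rule22 u i = u (i-1) := by
    intro i h
    simp only [rule22]
    rw [hz i (Or.inl (by omega)), hz (i+1) (Or.inr (by omega))]
    ring
  have d1 : ∀ x : ZMod 2, 0 + x + x + 0 * x * x = 0 := by decide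
  have d2 : ∀ x : ZMod 2, x + x + 0 + x * x * 0 = 0 := by decide
  have d3 : ∀ a b : ZMod 2, a + 0 + b + a * 0 * b = a + b := by decide
  have d4 : ∀ x : ZMod 2, x + x + x + x * x * x = 0 + 0 := by decide
  have ho : ∀ (v : ℤ → ZMod 2) (i : ℤ), rule22 v i
      = v (i-1) + v i + v (i+1) + v (i-1) * v i * v (i+1) := fun _ _ => rfl
  constructor
  · intro m
    obtain ⟨k, rfl | rfl⟩ := Int.even_or_odd' m
    · rw [ho (rule22 u)]
      rw [hv0 _ (by omega), hv1 _ (by omega), hv2 _ (by omega)]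
      rw [show (2*(2*k):ℤ)+1+1 = 2*(2*k)+1+1 from rfl]
      exact d1 _
    · rw [ho (rule22 u)]
      rw [hv2 _ (by omega), hv3 _ (by omega), hv0 _ (by omega)]
      exact d2 _
  · intro m
    obtain ⟨k, rfl | rfl⟩ := Int.even_or_odd' m
    · rw [ho (rule22 u)]
      rw [hv3 _ (by omega), hv0 _ (by omega), hv1 _ (by omega)]
      rw [show ((2*(2*k):ℤ)-1-1) = 2*(2*k)-2 by ring,
          show ((2*(2*k):ℤ)+1+1) = 2*(2*k)+2 by ring]
      exact d3 _ _
    · rw [ho (rule22 u)]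
      rw [hv1 _ (by omega), hv2 _ (by omega), hv3 _ (by omega)]
      rw [show ((2*(2*k+1):ℤ)-1+1) = 2*(2*k+1) by ring,
          show ((2*(2*k+1):ℤ)+1-1) = 2*(2*k+1) by ring]
      rw [hz (2*(2*k+1)-2) (Or.inr (by omega)), hz (2*(2*k+1)+2) (Or.inr (by omega))]
      exact d4 _
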